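/- arXiv:2203.06353 — 3 statements merged into one kernel-verified Lean document; each statement's English description precedes it below -/
import Mathlib

section
/- The set of ex-ante efficient lotteries coincides with the set of ex-post efficient lotteries if and only if the set of ex-ante efficient lotteries is convex (i.e., closed under convex combinations t·p + (1−t)·q for t ∈ [0,1]). -/
attribute [local instance] Classical.propDecidable

/-- The strict part of a preference relation. -/
def strictPref {X : Type*} (r : X → X → Prop) (x y : X) : Prop := r x y ∧ ¬ r y x

/-- A preference: a complete (total) and transitive binary relation. -/
def IsPrefOrder {X : Type*} (r : X → X → Prop) : Prop :=
  (∀ x y, r x y ∨ r y x) ∧ Transitive r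

/-- A lottery over the finite set of outcomes `X`. -/
def IsLottery {X : Type*} [Fintype X] (p : X → ℝ) : Prop :=
  (∀ x, 0 ≤ p x) ∧ ∑ x, p x = 1

/-- Total weight a lottery `p` places on outcomes strictly preferred to `x`. -/
noncomputable def upWeight {X : Type*} [Fintype X] (r : X → X → Prop) (p : X → ℝ) (x : X) : ℝ :=
  ∑ y ∈ Finset.univ.filter (fun y => strictPref r y x), p y

/-- First-order stochastic dominance (weak): `p ≿ q`. -/
def SDge {X : Type*} [Fintype X] (r : X → X → Prop) (p q : X → ℝ) : Prop :=
  ∀ x, upWeight r q x ≤ upWeight r p x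

/-- First-order stochastic dominance (strict): `p ≻ q`. -/
def SDgt {X : Type*} [Fintype X] (r : X → X → Prop) (p q : X → ℝ) : Prop :=
  SDge r p q ∧ ∃ x, upWeight r q x < upWeight r p x

/-- A lottery `p` is ex-ante efficient if no lottery weakly SD-dominates it for all agents
and strictly for some agent. -/
def ExAnteEff {X N : Type*} [Fintype X] (pref : N → X → X → Prop) (p : X → ℝ) : Prop :=
  ¬ ∃ q : X → ℝ, IsLottery q ∧ (∀ i, SDge (pref i) q p) ∧ ∃ j, SDgt (pref j) q p

/-- An outcome is Pareto optimal if no outcome is weakly better for all agents and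
strictly better for some agent. -/
def ParetoOptimal {X N : Type*} (pref : N → X → X → Prop) (x : X) : Prop :=
  ¬ ∃ y, (∀ i, pref i y x) ∧ ∃ j, strictPref (pref j) y x

/-- A lottery is ex-post efficient if it is supported on Pareto optimal outcomes. -/
def ExPostEff {X N : Type*} [Fintype X] (pref : N → X → X → Prop) (p : X → ℝ) : Prop :=
  ∀ x, 0 < p x → ParetoOptimal pref x

/-- `u` is a utility representation of the preference `r`. -/
def Represents {X : Type*} (u : X → ℝ) (r : X → X → Prop) : Prop :=
  ∀ x y, (u y ≤ u x ↔ r x y)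

/-! An outcome `y` Pareto dominating `x` satisfies `x ≻ᵢ z → y ≻ᵢ z` for every agent, so moving the
mass of a lottery from a dominated outcome `x` to `y` is a stochastic-dominance improvement: ex-ante
efficient lotteries are ex-post efficient. Conversely, a point mass on a Pareto optimal outcome is
ex-ante efficient, and every ex-post efficient lottery is a convex combination of such point masses.
Hence, if the ex-ante efficient lotteries form a convex set, they exhaust the ex-post efficient
ones; and the ex-post efficient lotteries always form a convex set. -/

section

variable {X N : Type*}

lemma strictPref_of_pref_of_strictPref {r : X → X → Prop} (hr : IsPrefOrder r) {x y z : X}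
    (hyx : r y x) (hxz : strictPref r x z) : strictPref r y z :=
  ⟨hr.2 hyx hxz.1, fun hzy => hxz.2 (hr.2 hzy hyx)⟩

lemma not_strictPref_self (r : X → X → Prop) (x : X) : ¬ strictPref r x x :=
  fun h => h.2 h.1

variable [Fintype X]

lemma isLottery_single (x : X) : IsLottery (Pi.single x 1) := single_mem_stdSimplex ℝ x

lemma sum_support_smul_single {p : X → ℝ} :
    ∑ x with p x ≠ 0, p x • Pi.single x (1 : ℝ) = p := by
  rw [Finset.sum_filter_of_ne fun x _ hx => left_ne_zero_of_smul hx]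
  simp only [← Pi.single_smul, smul_eq_mul, mul_one]
  exact Finset.univ_sum_single p

lemma Convex.mem_of_isLottery {s : Set (X → ℝ)} (hs : Convex ℝ s) {p : X → ℝ} (hp : IsLottery p)
    (h : ∀ x, 0 < p x → Pi.single x 1 ∈ s) : p ∈ s := by
  rw [← sum_support_smul_single (p := p)]
  refine hs.sum_mem (fun x _ => hp.1 x) ?_ fun x hx => h x ?_
  · rw [Finset.sum_filter_ne_zero, hp.2]
  · exact (hp.1 x).lt_of_ne (Finset.mem_filter.1 hx).2.symm

lemma upWeight_add (r : X → X → Prop) (p q : X → ℝ) (z : X) :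
    upWeight r (p + q) z = upWeight r p z + upWeight r q z :=
  Finset.sum_add_distrib

lemma upWeight_sub (r : X → X → Prop) (p q : X → ℝ) (z : X) :
    upWeight r (p - q) z = upWeight r p z - upWeight r q z :=
  Finset.sum_sub_distrib ..

lemma upWeight_single (r : X → X → Prop) (x : X) (a : ℝ) (z : X) :
    upWeight r (Pi.single x a) z = if strictPref r x z then a else 0 := by
  simp [upWeight, Finset.sum_pi_single']

lemma upWeight_le_one_sub {p : X → ℝ} (hp : IsLottery p) (r : X → X → Prop) (z : X) :
    upWeight r p z ≤ 1 - p z := by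
  have hsub : Finset.univ.filter (strictPref r · z) ⊆ Finset.univ.erase z := by
    intro y hy
    rw [Finset.mem_filter] at hy
    exact Finset.mem_erase.2 ⟨fun h => not_strictPref_self r z (h ▸ hy.2), Finset.mem_univ y⟩
  have hle := Finset.sum_le_sum_of_subset_of_nonneg hsub fun y _ _ => hp.1 y
  have htotal := Finset.add_sum_erase Finset.univ p (Finset.mem_univ z)
  rw [hp.2] at htotal
  unfold upWeight
  linarith

noncomputable def moveMass (p : X → ℝ) (x y : X) : X → ℝ :=
  p + Pi.single y (p x) - Pi.single x (p x)

lemma isLottery_moveMass {p : X → ℝ} (hp : IsLottery p) (x y : X) :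
    IsLottery (moveMass p x y) := by
  unfold moveMass
  have hsingle : 0 ≤ Pi.single (M := fun _ => ℝ) y (p x) := Pi.single_nonneg.2 (hp.1 x)
  refine ⟨fun z => ?_, ?_⟩
  · rcases eq_or_ne z x with rfl | hzx
    · simpa using hsingle z
    · simpa [Pi.single_eq_of_ne hzx] using add_nonneg (hp.1 z) (hsingle z)
  · simp only [Pi.sub_apply, Pi.add_apply, Finset.sum_sub_distrib, Finset.sum_add_distrib,
      Finset.sum_pi_single', Finset.mem_univ, if_true, hp.2, add_sub_cancel_right]

lemma upWeight_moveMass (r : X → X → Prop) (p : X → ℝ) (x y z : X) :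
    upWeight r (moveMass p x y) z =
      upWeight r p z + (if strictPref r y z then p x else 0)
        - (if strictPref r x z then p x else 0) := by
  rw [moveMass, upWeight_sub, upWeight_add, upWeight_single, upWeight_single]

lemma SDge_moveMass {r : X → X → Prop} (hr : IsPrefOrder r) {p : X → ℝ} (hp : IsLottery p)
    {x y : X} (hyx : r y x) : SDge r (moveMass p x y) p := by
  intro z
  rw [upWeight_moveMass]
  by_cases hxz : strictPref r x z
  · simp [hxz, strictPref_of_pref_of_strictPref hr hyx hxz]
  · have : (0 : ℝ) ≤ if strictPref r y z then p x else 0 := by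
      split_ifs
      exacts [hp.1 x, le_rfl]
    simp only [hxz, if_false]
    linarith

lemma SDgt_moveMass {r : X → X → Prop} (hr : IsPrefOrder r) {p : X → ℝ} (hp : IsLottery p)
    {x y : X} (hx : 0 < p x) (hyx : strictPref r y x) :
    SDgt r (moveMass p x y) p := by
  refine ⟨SDge_moveMass hr hp hyx.1, x, ?_⟩
  rw [upWeight_moveMass, if_pos hyx, if_neg (not_strictPref_self r x)]
  linarith

lemma exPostEff_of_exAnteEff {pref : N → X → X → Prop} (hpref : ∀ i, IsPrefOrder (pref i))
    {p : X → ℝ} (hp : IsLottery p) (h : ExAnteEff pref p) : ExPostEff pref p := by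
  rintro x hx ⟨y, hyx, j, hj⟩
  exact h ⟨_, isLottery_moveMass hp x y, fun i => SDge_moveMass (hpref i) hp (hyx i), j,
    SDgt_moveMass (hpref j) hp hx hj⟩

lemma pref_of_SDge_single {r : X → X → Prop} (hr : IsPrefOrder r) {q : X → ℝ} (hq : IsLottery q)
    {x y : X} (h : SDge r q (Pi.single x 1)) (hy : 0 < q y) : r y x := by
  by_contra hyx
  have hge := h y
  rw [upWeight_single, if_pos ⟨(hr.1 x y).resolve_right hyx, hyx⟩] at hge
  linarith [upWeight_le_one_sub hq r y]

lemma exists_strictPref_of_SDgt_single {r : X → X → Prop} (hr : IsPrefOrder r) {q : X → ℝ}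
    (hq : IsLottery q) {x : X} (h : SDgt r q (Pi.single x 1)) :
    ∃ y, 0 < q y ∧ strictPref r y x := by
  by_contra! hindiff
  obtain ⟨z, hz⟩ := h.2
  rw [upWeight_single] at hz
  split_ifs at hz with hxz
  · linarith [upWeight_le_one_sub hq r z, hq.1 z]
  · -- every outcome in the support of `q` is indifferent to `x`, hence not strictly above `z`
    have hzero : upWeight r q z ≤ 0 := by
      refine Finset.sum_nonpos fun w hw => not_lt.1 fun hqw => hxz ?_
      have hxw : r x w := by
        by_contra hxw
        exact hindiff w hqw ⟨pref_of_SDge_single hr hq h.1 hqw, hxw⟩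
      exact strictPref_of_pref_of_strictPref hr hxw (Finset.mem_filter.1 hw).2
    linarith

lemma exAnteEff_single {pref : N → X → X → Prop} (hpref : ∀ i, IsPrefOrder (pref i)) {x : X}
    (hx : ParetoOptimal pref x) : ExAnteEff pref (Pi.single x 1) := by
  rintro ⟨q, hq, hge, j, hgt⟩
  obtain ⟨y, hy, hyx⟩ := exists_strictPref_of_SDgt_single (hpref j) hq hgt
  exact hx ⟨y, fun i => pref_of_SDge_single (hpref i) hq (hge i) hy, j, hyx⟩

lemma convex_exPostEff (pref : N → X → X → Prop) :
    Convex ℝ {p : X → ℝ | IsLottery p ∧ ExPostEff pref p} := by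
  rintro p ⟨hp, hpost⟩ q ⟨hq, hqost⟩ a b ha hb hab
  refine ⟨convex_stdSimplex ℝ X hp hq ha hb hab, fun z hz => ?_⟩
  by_cases hpz : 0 < p z
  · exact hpost z hpz
  · have hpz : p z = 0 := le_antisymm (not_lt.1 hpz) (hp.1 z)
    simp only [Pi.add_apply, Pi.smul_apply, smul_eq_mul, hpz, mul_zero, zero_add] at hz
    exact hqost z (pos_of_mul_pos_right hz hb)

end

theorem stmt_4_general {X N : Type*} [Fintype X]
    (pref : N → X → X → Prop) (hpref : ∀ i, IsPrefOrder (pref i)) :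
    ({p : X → ℝ | IsLottery p ∧ ExAnteEff pref p} =
        {p : X → ℝ | IsLottery p ∧ ExPostEff pref p}) ↔
      Convex ℝ {p : X → ℝ | IsLottery p ∧ ExAnteEff pref p} := by
  refine ⟨fun h => h ▸ convex_exPostEff pref, fun hconv => ?_⟩
  refine Set.Subset.antisymm (fun p ⟨hp, hante⟩ => ⟨hp, exPostEff_of_exAnteEff hpref hp hante⟩) ?_
  rintro p ⟨hp, hpost⟩
  exact hconv.mem_of_isLottery hp fun x hx =>
    ⟨isLottery_single x, exAnteEff_single hpref (hpost x hx)⟩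

/-- Ex-ante efficiency coincides with ex-post efficiency iff the set of
ex-ante efficient lotteries is convex. -/
theorem stmt_4 {X N : Type*} [Fintype X] [Nonempty X] [Fintype N] [Nonempty N]
    (pref : N → X → X → Prop) (hpref : ∀ i, IsPrefOrder (pref i)) :
    ({p : X → ℝ | IsLottery p ∧ ExAnteEff pref p} =
        {p : X → ℝ | IsLottery p ∧ ExPostEff pref p}) ↔
      Convex ℝ {p : X → ℝ | IsLottery p ∧ ExAnteEff pref p} :=
  stmt_4_general pref hpref
end

section
/- Assume X* is nonempty. The set of ex-ante efficient lotteries coincides with the set of ex-post efficient lotteries if and only if the uniform lottery over X* (assigning probability 1/|X*| to each Pareto optimal outcome and 0 elsewhere) is ex-ante efficient. -/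
attribute [local instance] Classical.propDecidable

lemma upWeight_lin {X : Type*} [Fintype X] (r : X → X → Prop) (u q p : X → ℝ) (ε : ℝ) (x : X) :
    upWeight r (fun z => u z + ε * (q z - p z)) x
      = upWeight r u x + ε * (upWeight r q x - upWeight r p x) := by
  unfold upWeight
  rw [← Finset.sum_sub_distrib, Finset.mul_sum, ← Finset.sum_add_distrib]

lemma ind_sum {X : Type*} [Fintype X] (r : X → X → Prop) (y z : X) :
    (∑ w ∈ Finset.univ.filter (fun w => strictPref r w z), (if w = y then (1:ℝ) else 0))
      = if strictPref r y z then 1 else 0 := by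
  rw [Finset.sum_ite_eq' _ y (fun _ => (1:ℝ))]
  simp

lemma strict_trans {X : Type*} {r : X → X → Prop} (h : IsPrefOrder r) {x y z : X}
    (hyx : r y x) (hxz : strictPref r x z) : strictPref r y z :=
  ⟨h.2 hyx hxz.1, fun hzy => hxz.2 (h.2 hzy hyx)⟩

lemma pref_refl {X : Type*} {r : X → X → Prop} (h : IsPrefOrder r) (x : X) : r x x :=
  (h.1 x x).elim id id

lemma exAnte_imp_exPost {X N : Type*} [Fintype X] (pref : N → X → X → Prop)
    (hpref : ∀ i, IsPrefOrder (pref i)) {p : X → ℝ} (hp : IsLottery p)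
    (h : ExAnteEff pref p) : ExPostEff pref p := by
  intro x hx
  by_contra hnpo
  obtain ⟨y, hy, j, hj⟩ := not_not.mp hnpo
  have hxy : x ≠ y := fun he => hj.2 (he ▸ pref_refl (hpref j) x)
  set q : X → ℝ :=
    fun z => p z + p x * ((if z = y then 1 else 0) - (if z = x then 1 else 0)) with hqdef
  have key : ∀ (r : X → X → Prop) (z : X), upWeight r q z
      = upWeight r p z + p x * ((if strictPref r y z then 1 else 0)
          - (if strictPref r x z then 1 else 0)) := by
    intro r z
    unfold upWeight
    rw [hqdef]
    rw [Finset.sum_add_distrib, ← Finset.mul_sum, Finset.sum_sub_distrib, ind_sum, ind_sum]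
  have hge : ∀ i, SDge (pref i) q p := by
    intro i z
    rw [key]
    have hnn : 0 ≤ p x * ((if strictPref (pref i) y z then (1:ℝ) else 0)
        - (if strictPref (pref i) x z then 1 else 0)) := by
      apply mul_nonneg hx.le
      by_cases hxz : strictPref (pref i) x z
      · simp [hxz, strict_trans (hpref i) (hy i) hxz]
      · simp only [hxz, if_neg, if_false, sub_zero]
        positivity
    linarith
  apply h
  refine ⟨q, ⟨?_, ?_⟩, hge, j, hge j, x, ?_⟩
  · intro z
    rw [hqdef]
    by_cases hzx : z = x
    · subst hzx
      simp [hxy]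
    · by_cases hzy : z = y
      · subst hzy
        simp only [if_pos trivial, eq_self_iff_true, if_true, if_neg hzx, sub_zero, mul_one]
        have := hp.1 z
        linarith
      · simp [hzx, hzy, hp.1 z]
  · rw [hqdef]
    rw [Finset.sum_add_distrib, ← Finset.mul_sum, Finset.sum_sub_distrib]
    simp [Finset.sum_ite_eq' Finset.univ y (fun _ => (1:ℝ)),
      Finset.sum_ite_eq' Finset.univ x (fun _ => (1:ℝ)), hp.2]
  · rw [key]
    have h1 : strictPref (pref j) y x := hj
    have h2 : ¬ strictPref (pref j) x x := fun hc => hc.2 (pref_refl (hpref j) x)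
    simp only [if_pos h1, if_neg h2, sub_zero, mul_one]
    linarith

/-- Ex-ante efficiency coincides with ex-post efficiency iff the uniform
lottery over the (nonempty) set of Pareto optimal outcomes is ex-ante efficient. -/
theorem stmt_5 {X N : Type*} [Fintype X] [Nonempty X] [Fintype N] [Nonempty N]
    (pref : N → X → X → Prop) (hpref : ∀ i, IsPrefOrder (pref i))
    (hPO : ∃ x, ParetoOptimal pref x) :
    ({p : X → ℝ | IsLottery p ∧ ExAnteEff pref p} =
        {p : X → ℝ | IsLottery p ∧ ExPostEff pref p}) ↔
      ExAnteEff pref (fun x => if ParetoOptimal pref x then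
        1 / ((Finset.univ.filter (fun y => ParetoOptimal pref y)).card : ℝ) else 0) := by
    classical
  have hkpos : 0 < (Finset.univ.filter (fun y => ParetoOptimal pref y)).card := by
    obtain ⟨x, hx⟩ := hPO
    exact Finset.card_pos.mpr ⟨x, by simp [hx]⟩
  set c : ℝ := ((Finset.univ.filter (fun y => ParetoOptimal pref y)).card : ℝ) with hc
  have hcpos : 0 < c := by rw [hc]; exact_mod_cast hkpos
  have h1c : 0 < 1 / c := one_div_pos.mpr hcpos
  set u : X → ℝ := fun x => if ParetoOptimal pref x then 1 / c else 0 with hudef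
  have huL : IsLottery u := by
    constructor
    · intro x
      rw [hudef]
      dsimp only
      split
      · exact h1c.le
      · exact le_refl 0
    · rw [hudef]
      rw [← Finset.sum_filter, Finset.sum_const, nsmul_eq_mul]
      rw [← hc]
      field_simp
  have huPost : ExPostEff pref u := by
    intro x hx
    rw [hudef] at hx
    dsimp only at hx
    by_contra hn
    simp [hn] at hx
  constructor
  · intro hset
    have hmem : u ∈ {p : X → ℝ | IsLottery p ∧ ExAnteEff pref p} := by
      rw [hset]
      exact ⟨huL, huPost⟩
    exact hmem.2
  · intro hEA
    ext p
    simp only [Set.mem_setOf_eq]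
    constructor
    · rintro ⟨hpL, hpA⟩
      exact ⟨hpL, exAnte_imp_exPost pref hpref hpL hpA⟩
    · rintro ⟨hpL, hpP⟩
      refine ⟨hpL, ?_⟩
      rintro ⟨q, hqL, hge, j, hgt⟩
      apply hEA
      refine ⟨fun z => u z + (1 / c) * (q z - p z), ⟨?_, ?_⟩, ?_, j, ?_⟩
      · intro z
        show 0 ≤ u z + 1 / c * (q z - p z)
        by_cases hle : p z ≤ q z
        · have h0 : 0 ≤ (1 / c) * (q z - p z) := mul_nonneg h1c.le (by linarith)
          have := huL.1 z
          linarith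
        · push_neg at hle
          have hpz : 0 < p z := lt_of_le_of_lt (hqL.1 z) hle
          have hPOz : ParetoOptimal pref z := hpP z hpz
          have huz : u z = 1 / c := by rw [hudef]; simp [hPOz]
          have hp1 : p z ≤ 1 := by
            rw [← hpL.2]
            exact Finset.single_le_sum (fun x _ => hpL.1 x) (Finset.mem_univ z)
          have hq0 : 0 ≤ q z := hqL.1 z
          have h0 : (0:ℝ) ≤ (1 / c) * (1 + (q z - p z)) := mul_nonneg h1c.le (by linarith)
          rw [huz]
          nlinarith
      · rw [Finset.sum_add_distrib, ← Finset.mul_sum, Finset.sum_sub_distrib,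
          huL.2, hpL.2, hqL.2]
        ring
      · intro i z
        rw [upWeight_lin]
        have hz := hge i z
        have h0 : 0 ≤ (1 / c) * (upWeight (pref i) q z - upWeight (pref i) p z) :=
          mul_nonneg h1c.le (by linarith)
        linarith
      · obtain ⟨hgej, z, hz⟩ := hgt
        constructor
        · intro w
          rw [upWeight_lin]
          have hw := hgej w
          have h0 : 0 ≤ (1 / c) * (upWeight (pref j) q w - upWeight (pref j) p w) :=
            mul_nonneg h1c.le (by linarith)
          linarith
        · refine ⟨z, ?_⟩
          rw [upWeight_lin]
          have h0 : 0 < (1 / c) * (upWeight (pref j) q z - upWeight (pref j) p z) :=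
            mul_pos h1c (by linarith)
          linarith
end

section
/- If the set X* of Pareto optimal outcomes has at most 3 elements, then every ex-post efficient lottery is ex-ante efficient. -/
attribute [local instance] Classical.propDecidable

section Aux
set_option linter.unusedSectionVars false

variable {X : Type*} [Fintype X]

lemma prefOrder_refl {r : X → X → Prop} (h : IsPrefOrder r) (x : X) : r x x :=
  (h.1 x x).elim id id

lemma strictPref_irrefl {r : X → X → Prop} (x : X) : ¬ strictPref r x x :=
  fun hs => hs.2 hs.1

lemma pref_of_not_strict {r : X → X → Prop} (h : IsPrefOrder r) {x b : X}
    (hn : ¬ strictPref r b x) : r x b := by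
  rcases h.1 x b with h1 | h1
  · exact h1
  · by_contra h2; exact hn ⟨h1, h2⟩

lemma strict_trans_left {r : X → X → Prop} (h : IsPrefOrder r) {a b c : X}
    (hab : r a b) (hbc : strictPref r b c) : strictPref r a c :=
  ⟨h.2 hab hbc.1, fun hca => hbc.2 (h.2 hca hab)⟩

lemma strict_trans_right {r : X → X → Prop} (h : IsPrefOrder r) {a b c : X}
    (hab : strictPref r a b) (hbc : r b c) : strictPref r a c :=
  ⟨h.2 hab.1 hbc, fun hca => hab.2 (h.2 hbc hca)⟩

/-- A canonical utility function: number of strictly worse outcomes. -/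
noncomputable def util (r : X → X → Prop) (x : X) : ℕ :=
  (Finset.univ.filter (fun z => strictPref r x z)).card

lemma util_mono {r : X → X → Prop} (h : IsPrefOrder r) {x y : X} (hxy : r x y) :
    util r y ≤ util r x := by
  apply Finset.card_le_card
  intro z hz
  simp only [Finset.mem_filter, Finset.mem_univ, true_and] at hz ⊢
  exact strict_trans_left h hxy hz

lemma util_strict {r : X → X → Prop} (h : IsPrefOrder r) {x y : X} (hxy : strictPref r x y) :
    util r y < util r x := by
  apply Finset.card_lt_card
  have hsub : (Finset.univ.filter (fun z => strictPref r y z)) ⊆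
      (Finset.univ.filter (fun z => strictPref r x z)) := by
    intro z hz
    simp only [Finset.mem_filter, Finset.mem_univ, true_and] at hz ⊢
    exact strict_trans_left h hxy.1 hz
  rw [Finset.ssubset_iff_of_subset hsub]
  refine ⟨y, ?_, ?_⟩
  · simp only [Finset.mem_filter, Finset.mem_univ, true_and]; exact hxy
  · simp only [Finset.mem_filter, Finset.mem_univ, true_and]
    exact strictPref_irrefl y

/-- Every outcome is weakly Pareto dominated by a Pareto optimal outcome. -/
lemma exists_pareto_dominator {N : Type*} [Fintype N] (pref : N → X → X → Prop)
    (hpref : ∀ i, IsPrefOrder (pref i)) (y : X) :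
    ∃ z, ParetoOptimal pref z ∧ ∀ i, pref i z y := by
  classical
  set S := Finset.univ.filter (fun z => ∀ i, pref i z y) with hS
  have hyS : y ∈ S := by
    simp only [hS, Finset.mem_filter, Finset.mem_univ, true_and]
    exact fun i => prefOrder_refl (hpref i) y
  obtain ⟨z, hzS, hzmax⟩ := S.exists_max_image (fun z => ∑ i, util (pref i) z) ⟨y, hyS⟩
  have hzS' : ∀ i, pref i z y := by
    simpa only [hS, Finset.mem_filter, Finset.mem_univ, true_and] using hzS
  refine ⟨z, ?_, hzS'⟩
  rintro ⟨w, hw, j, hwj⟩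
  have hwS : w ∈ S := by
    simp only [hS, Finset.mem_filter, Finset.mem_univ, true_and]
    exact fun i => (hpref i).2 (hw i) (hzS' i)
  have hlt : ∑ i, util (pref i) z < ∑ i, util (pref i) w :=
    Finset.sum_lt_sum (fun i _ => util_mono (hpref i) (hw i))
      ⟨j, Finset.mem_univ j, util_strict (hpref j) hwj⟩
  exact absurd (hzmax w hwS) (not_le.mpr hlt)

lemma upWeight_sub_s8 (r : X → X → Prop) (p q : X → ℝ) (x : X) :
    upWeight r q x - upWeight r p x
      = ∑ y ∈ Finset.univ.filter (fun y => strictPref r y x), (q y - p y) := by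
  rw [Finset.sum_sub_distrib]; rfl

end Aux

/-- If there are at most 3 Pareto optimal outcomes, every ex-post efficient
lottery is ex-ante efficient. -/
theorem stmt_8 {X N : Type*} [Fintype X] [Nonempty X] [Fintype N] [Nonempty N]
    (pref : N → X → X → Prop) (hpref : ∀ i, IsPrefOrder (pref i))
    (hcard : (Finset.univ.filter (fun x => ParetoOptimal pref x)).card ≤ 3)
    (p : X → ℝ) (hp : IsLottery p) (hpost : ExPostEff pref p) :
    ExAnteEff pref p := by
  classical
  rintro ⟨q, hq, hge, j, hgt⟩
  -- Push forward q to Pareto optimal outcomes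
  choose f hf1 hf2 using fun y => exists_pareto_dominator pref hpref y
  set q' : X → ℝ := fun x => ∑ y ∈ Finset.univ.filter (fun y => f y = x), q y with hq'def
  have hq'nonneg : ∀ x, 0 ≤ q' x := fun x => Finset.sum_nonneg (fun y _ => hq.1 y)
  have hq'sum : ∑ x, q' x = 1 := by
    rw [hq'def]
    rw [Finset.sum_fiberwise Finset.univ f q]
    exact hq.2
  -- q' SD-dominates q for every agent
  have hup : ∀ i x, upWeight (pref i) q x ≤ upWeight (pref i) q' x := by
    intro i x
    have h1 : upWeight (pref i) q' x
        = ∑ y ∈ Finset.univ.filter (fun y => strictPref (pref i) (f y) x), q y := by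
      rw [upWeight, hq'def]
      rw [Finset.sum_fiberwise_eq_sum_filter Finset.univ
        (Finset.univ.filter (fun y => strictPref (pref i) y x)) f q]
      congr 1
      ext y
      simp [Finset.mem_filter]
    rw [h1, upWeight]
    apply Finset.sum_le_sum_of_subset_of_nonneg
    · intro y hy
      simp only [Finset.mem_filter, Finset.mem_univ, true_and] at hy ⊢
      exact strict_trans_left (hpref i) (hf2 y i) hy
    · intro y _ _; exact hq.1 y
  have hge' : ∀ i, SDge (pref i) q' p := fun i x => le_trans (hge i x) (hup i x)
  obtain ⟨x₀, hx₀⟩ := hgt.2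
  have hgt' : upWeight (pref j) p x₀ < upWeight (pref j) q' x₀ :=
    lt_of_lt_of_le hx₀ (hup j x₀)
  -- the difference d
  set d : X → ℝ := fun x => q' x - p x with hd
  set P : Finset X := Finset.univ.filter (fun x => 0 < d x) with hPdef
  set M : Finset X := Finset.univ.filter (fun x => d x < 0) with hMdef
  -- SD inequalities in terms of d
  have hSD : ∀ i x, 0 ≤ ∑ y ∈ Finset.univ.filter (fun y => strictPref (pref i) y x), d y := by
    intro i x
    have := hge' i x
    have h2 := upWeight_sub_s8 (pref i) p q' x
    rw [hd]; linarith [h2 ▸ sub_nonneg.mpr this]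
  have hSDstrict : 0 < ∑ y ∈ Finset.univ.filter (fun y => strictPref (pref j) y x₀), d y := by
    have h2 := upWeight_sub_s8 (pref j) p q' x₀
    rw [hd]; linarith [h2 ▸ sub_pos.mpr hgt']
  -- splitting sums
  have hsplit : ∀ U : Finset X, ∑ y ∈ U, d y = ∑ y ∈ U ∩ P, d y + ∑ y ∈ U ∩ M, d y := by
    intro U
    have h1 : ∑ y ∈ U, d y
        = ∑ y ∈ U.filter (fun y => 0 < d y), d y + ∑ y ∈ U.filter (fun y => ¬ 0 < d y), d y :=
      (Finset.sum_filter_add_sum_filter_not U _ d).symm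
    have h2 : U.filter (fun y => 0 < d y) = U ∩ P := by
      ext y; simp [hPdef, Finset.mem_filter, Finset.mem_inter]
    have hsub : U ∩ M ⊆ U.filter (fun y => ¬ 0 < d y) := by
      intro y hy
      simp only [hMdef, Finset.mem_inter, Finset.mem_filter, Finset.mem_univ, true_and] at hy ⊢
      exact ⟨hy.1, not_lt.mpr (le_of_lt hy.2)⟩
    have h3 : ∑ y ∈ U.filter (fun y => ¬ 0 < d y), d y = ∑ y ∈ U ∩ M, d y := by
      symm
      apply Finset.sum_subset hsub
      intro y hy hyn
      simp only [hMdef, Finset.mem_inter, Finset.mem_filter, Finset.mem_univ, true_and] at hy hyn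
      have h4 : ¬ d y < 0 := fun hlt => hyn ⟨hy.1, hlt⟩
      linarith [not_lt.mp hy.2, not_lt.mp h4]
    rw [h1, h2, h3]
  have hdsum : ∑ y, d y = 0 := by
    rw [hd]
    rw [Finset.sum_sub_distrib, hq'sum, hp.2]; ring
  have hPM : ∑ y ∈ P, d y + ∑ y ∈ M, d y = 0 := by
    have := hsplit Finset.univ
    rw [Finset.univ_inter, Finset.univ_inter] at this
    rw [← this, hdsum]
  have hPpos : ∀ y ∈ P, 0 < d y := by
    intro y hy; simpa [hPdef] using hy
  have hMneg : ∀ y ∈ M, d y < 0 := by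
    intro y hy; simpa [hMdef] using hy
  -- P and M are nonempty
  have hdne : ∃ y, d y ≠ 0 := by
    by_contra h
    push_neg at h
    rw [Finset.sum_congr rfl (fun y _ => h y)] at hSDstrict
    simp at hSDstrict
  have hMP : P.Nonempty ∧ M.Nonempty := by
    obtain ⟨y, hy⟩ := hdne
    rcases lt_or_gt_of_ne hy with h | h
    · have hyM : y ∈ M := by simp [hMdef, h]
      have hMsum : ∑ z ∈ M, d z < 0 := by
        calc ∑ z ∈ M, d z ≤ d y := by
              have := Finset.add_sum_erase M d hyM
              have hle : ∑ z ∈ M.erase y, d z ≤ 0 :=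
                Finset.sum_nonpos (fun z hz => le_of_lt (hMneg z (Finset.mem_of_mem_erase hz)))
              linarith
          _ < 0 := h
      have hPsum : 0 < ∑ z ∈ P, d z := by linarith
      have hPne : P.Nonempty := by
        by_contra hP
        rw [Finset.not_nonempty_iff_eq_empty.mp hP] at hPsum
        simp at hPsum
      exact ⟨hPne, ⟨y, hyM⟩⟩
    · have hyP : y ∈ P := by simp [hPdef, h]
      have hPsum : 0 < ∑ z ∈ P, d z := by
        calc (0:ℝ) < d y := h
          _ ≤ ∑ z ∈ P, d z := by
              have := Finset.add_sum_erase P d hyP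
              have hle : 0 ≤ ∑ z ∈ P.erase y, d z :=
                Finset.sum_nonneg (fun z hz => le_of_lt (hPpos z (Finset.mem_of_mem_erase hz)))
              linarith
      have hMsum : ∑ z ∈ M, d z < 0 := by linarith
      have hMne : M.Nonempty := by
        by_contra hM
        rw [Finset.not_nonempty_iff_eq_empty.mp hM] at hMsum
        simp at hMsum
      exact ⟨⟨y, hyP⟩, hMne⟩
  -- membership in Pareto optimal set
  have hPpar : ∀ y ∈ P, ParetoOptimal pref y := by
    intro y hy
    have hdy : 0 < d y := hPpos y hy
    have hq'y : 0 < q' y := by have := hp.1 y; rw [hd] at hdy; simp at hdy; linarith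
    have hfib : (Finset.univ.filter (fun z => f z = y)).Nonempty := by
      by_contra h
      have hemp := Finset.not_nonempty_iff_eq_empty.mp h
      have hz : q' y = 0 := by
        simp only [hq'def]
        rw [hemp, Finset.sum_empty]
      linarith
    obtain ⟨z, hz⟩ := hfib
    simp only [Finset.mem_filter, Finset.mem_univ, true_and] at hz
    rw [← hz]; exact hf1 z
  have hMpar : ∀ y ∈ M, ParetoOptimal pref y := by
    intro y hy
    have hdy : d y < 0 := hMneg y hy
    have hpy : 0 < p y := by
      have := hq'nonneg y; rw [hd] at hdy; simp at hdy; linarith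
    exact hpost y hpy
  -- card bound
  have hdisj : Disjoint P M := by
    rw [Finset.disjoint_left]
    intro y hyP hyM
    exact absurd (hPpos y hyP) (not_lt.mpr (le_of_lt (hMneg y hyM)))
  have hcard3 : P.card + M.card ≤ 3 := by
    rw [← Finset.card_union_of_disjoint hdisj]
    refine le_trans (Finset.card_le_card ?_) hcard
    intro y hy
    simp only [Finset.mem_filter, Finset.mem_univ, true_and]
    rcases Finset.mem_union.mp hy with h | h
    · exact hPpar y h
    · exact hMpar y h
  have hcase : P.card = 1 ∨ M.card = 1 := by
    have h1 : 1 ≤ P.card := Finset.card_pos.mpr hMP.1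
    have h2 : 1 ≤ M.card := Finset.card_pos.mpr hMP.2
    omega
  rcases hcase with hPone | hMone
  · -- P = {a}
    obtain ⟨a, ha⟩ := Finset.card_eq_one.mp hPone
    have haP : a ∈ P := by rw [ha]; exact Finset.mem_singleton_self a
    have hda : 0 < d a := hPpos a haP
    -- a weakly dominates everything in M, for every agent
    have hab : ∀ i, ∀ b ∈ M, pref i a b := by
      intro i b hb
      by_contra hnab
      have hba : strictPref (pref i) b a := by
        rcases (hpref i).1 b a with h1 | h1
        · exact ⟨h1, hnab⟩
        · exact absurd h1 hnab
      set U := Finset.univ.filter (fun y => strictPref (pref i) y a) with hU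
      have haU : a ∉ U := by simp [hU, strictPref_irrefl]
      have hbU : b ∈ U := by simp [hU, hba]
      have hUP : U ∩ P = ∅ := by
        rw [ha]
        rw [Finset.eq_empty_iff_forall_notMem]
        intro z hz
        rcases Finset.mem_inter.mp hz with ⟨hz1, hz2⟩
        rw [Finset.mem_singleton] at hz2
        exact haU (hz2 ▸ hz1)
      have hbUM : b ∈ U ∩ M := Finset.mem_inter.mpr ⟨hbU, hb⟩
      have hneg : ∑ y ∈ U ∩ M, d y < 0 := by
        have := Finset.add_sum_erase (U ∩ M) d hbUM
        have hle : ∑ z ∈ (U ∩ M).erase b, d z ≤ 0 :=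
          Finset.sum_nonpos (fun z hz => le_of_lt (hMneg z
            (Finset.mem_inter.mp (Finset.mem_of_mem_erase hz)).2))
        have hdb : d b < 0 := hMneg b hb
        linarith
      have h0 := hSD i a
      rw [hsplit U, hUP] at h0
      simp at h0
      linarith
    -- strictness gives strict dominance over some b ∈ M
    set U := Finset.univ.filter (fun y => strictPref (pref j) y x₀) with hU
    have haU : a ∈ U := by
      by_contra haU
      have hUP : U ∩ P = ∅ := by
        rw [ha, Finset.eq_empty_iff_forall_notMem]
        intro z hz
        rcases Finset.mem_inter.mp hz with ⟨hz1, hz2⟩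
        rw [Finset.mem_singleton] at hz2
        exact haU (hz2 ▸ hz1)
      have h0 := hSDstrict
      rw [hsplit U, hUP] at h0
      simp at h0
      have hle : ∑ z ∈ U ∩ M, d z ≤ 0 :=
        Finset.sum_nonpos (fun z hz => le_of_lt (hMneg z (Finset.mem_inter.mp hz).2))
      linarith
    have hbex : ∃ b ∈ M, b ∉ U := by
      by_contra h
      push_neg at h
      have hUM : U ∩ M = M := by
        apply Finset.inter_eq_right.mpr
        intro z hz; exact h z hz
      have hUP : U ∩ P = P := by
        apply Finset.inter_eq_right.mpr
        rw [ha]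
        intro z hz
        rw [Finset.mem_singleton] at hz
        exact hz ▸ haU
      have h0 := hSDstrict
      rw [hsplit U, hUM, hUP] at h0
      linarith
    obtain ⟨b, hbM, hbU⟩ := hbex
    have hax₀ : strictPref (pref j) a x₀ := by
      simpa [hU] using haU
    have hx₀b : pref j x₀ b := by
      apply pref_of_not_strict (hpref j)
      intro hc
      exact hbU (by simp [hU, hc])
    have hab' : strictPref (pref j) a b := strict_trans_right (hpref j) hax₀ hx₀b
    exact hMpar b hbM ⟨a, fun i => hab i b hbM, j, hab'⟩
  · -- M = {c}
    obtain ⟨c, hc⟩ := Finset.card_eq_one.mp hMone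
    have hcM : c ∈ M := by rw [hc]; exact Finset.mem_singleton_self c
    have hdc : d c < 0 := hMneg c hcM
    have hPsum : ∑ y ∈ P, d y = - d c := by
      rw [hc] at hPM
      simp at hPM
      linarith
    -- every a ∈ P weakly dominates c, for every agent
    have hac : ∀ i, ∀ a ∈ P, pref i a c := by
      intro i a haP
      by_contra hnac
      have hca : strictPref (pref i) c a := by
        rcases (hpref i).1 c a with h1 | h1
        · exact ⟨h1, hnac⟩
        · exact absurd h1 hnac
      set U := Finset.univ.filter (fun y => strictPref (pref i) y a) with hU
      have haU : a ∉ U := by simp [hU, strictPref_irrefl]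
      have hcU : c ∈ U := by simp [hU, hca]
      have hUM : U ∩ M = M := by
        apply Finset.inter_eq_right.mpr
        rw [hc]
        intro z hz
        rw [Finset.mem_singleton] at hz
        exact hz ▸ hcU
      have hsubP : U ∩ P ⊆ P.erase a := by
        intro z hz
        rcases Finset.mem_inter.mp hz with ⟨hz1, hz2⟩
        rw [Finset.mem_erase]
        exact ⟨fun h => haU (h ▸ hz1), hz2⟩
      have hUPle : ∑ y ∈ U ∩ P, d y ≤ ∑ y ∈ P.erase a, d y := by
        apply Finset.sum_le_sum_of_subset_of_nonneg hsubP
        intro z hz _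
        exact le_of_lt (hPpos z (Finset.mem_of_mem_erase hz))
      have hErase : ∑ y ∈ P.erase a, d y = ∑ y ∈ P, d y - d a := by
        have := Finset.add_sum_erase P d haP
        linarith
      have hMc : ∑ y ∈ M, d y = d c := by rw [hc]; simp
      have h0 := hSD i a
      rw [hsplit U, hUM, hMc] at h0
      have hda : 0 < d a := hPpos a haP
      rw [hErase, hPsum] at hUPle
      linarith
    -- strictness
    set U := Finset.univ.filter (fun y => strictPref (pref j) y x₀) with hU
    have hcU : c ∉ U := by
      by_contra hcU
      have hUM : U ∩ M = M := by
        apply Finset.inter_eq_right.mpr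
        rw [hc]
        intro z hz
        rw [Finset.mem_singleton] at hz
        exact hz ▸ hcU
      have hMc : ∑ y ∈ M, d y = d c := by rw [hc]; simp
      have hUPle : ∑ y ∈ U ∩ P, d y ≤ ∑ y ∈ P, d y :=
        Finset.sum_le_sum_of_subset_of_nonneg (Finset.inter_subset_right)
          (fun z hz _ => le_of_lt (hPpos z hz))
      have h0 := hSDstrict
      rw [hsplit U, hUM, hMc] at h0
      linarith
    have hUM : U ∩ M = ∅ := by
      rw [hc, Finset.eq_empty_iff_forall_notMem]
      intro z hz
      rcases Finset.mem_inter.mp hz with ⟨hz1, hz2⟩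
      rw [Finset.mem_singleton] at hz2
      exact hcU (hz2 ▸ hz1)
    have hUPpos : 0 < ∑ y ∈ U ∩ P, d y := by
      have h0 := hSDstrict
      rw [hsplit U, hUM] at h0
      simpa using h0
    have hane : (U ∩ P).Nonempty := by
      by_contra h
      rw [Finset.not_nonempty_iff_eq_empty.mp h] at hUPpos
      simp at hUPpos
    obtain ⟨a, haUP⟩ := hane
    rcases Finset.mem_inter.mp haUP with ⟨haU, haP⟩
    have hax₀ : strictPref (pref j) a x₀ := by simpa [hU] using haU
    have hx₀c : pref j x₀ c := by
      apply pref_of_not_strict (hpref j)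
      intro hcc
      exact hcU (by simp [hU, hcc])
    have hac' : strictPref (pref j) a c := strict_trans_right (hpref j) hax₀ hx₀c
    exact hMpar c hcM ⟨a, fun i => hac i a haP, j, hac'⟩
end
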